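/- arXiv:2001.06655 — 4 statements merged into one kernel-verified Lean document; each statement's English description precedes it below -/
import Mathlib

section
/- For the operators S*_{n,a}, one has S*_{n,a}(e_2; x) = x·log(a)·((a^(1/n)−1) + x·log a) / ((a^(1/n)−1)^2 · n^2) for all x ≥ 0, where e_2(t) = t². -/
/-!
Put `y = x log a / (a^(1/n) - 1)`. Then `a^(-x/(a^(1/n)-1)) = e^(-y)`, so `S*_{n,a}(f; x)` is the
expectation of `f(K/n)` for a Poisson variable `K` of mean `y`. Shifting the index of the exponential
series gives `∑ k y^k/k! = y e^y` and `∑ k² y^k/k! = (y² + y) e^y`, whence `S*_{n,a}(e₂; x) = (y² + y)/n²`.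
-/

open Real Filter

noncomputable def szasz (a : ℝ) (n : ℕ) (f : ℝ → ℝ) (x : ℝ) : ℝ :=
  ∑' k : ℕ, a ^ (-x / (a ^ ((1:ℝ)/n) - 1)) *
    (x * Real.log a) ^ k / ((a ^ ((1:ℝ)/n) - 1) ^ k * (Nat.factorial k : ℝ)) * f (k / n)

open Nat

lemma Real.hasSum_pow_div_factorial (y : ℝ) : HasSum (fun k : ℕ => y ^ k / k !) (exp y) := by
  rw [exp_eq_exp_ℝ]
  exact NormedSpace.expSeries_div_hasSum_exp y

lemma succ_mul_pow_succ_div_factorial_succ (y : ℝ) (k : ℕ) :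
    ((k + 1 : ℕ) : ℝ) * y ^ (k + 1) / (k + 1)! = y * (y ^ k / k !) := by
  rw [factorial_succ, cast_mul, pow_succ]
  field_simp

lemma Real.hasSum_mul_pow_div_factorial (y : ℝ) :
    HasSum (fun k : ℕ => k * y ^ k / k !) (y * exp y) := by
  rw [← hasSum_nat_add_iff' 1, funext (succ_mul_pow_succ_div_factorial_succ y)]
  simpa using (hasSum_pow_div_factorial y).mul_left y

lemma Real.hasSum_sq_mul_pow_div_factorial (y : ℝ) :
    HasSum (fun k : ℕ => k ^ 2 * y ^ k / k !) ((y ^ 2 + y) * exp y) := by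
  have hshift (k : ℕ) : ((k + 1 : ℕ) : ℝ) ^ 2 * y ^ (k + 1) / (k + 1)! =
      y * (k * y ^ k / k ! + y ^ k / k !) := by
    rw [sq, mul_assoc, mul_div_assoc, succ_mul_pow_succ_div_factorial_succ]
    push_cast
    ring
  have hsum : (y ^ 2 + y) * exp y - ∑ k ∈ Finset.range 1, (k : ℝ) ^ 2 * y ^ k / k ! =
      y * (y * exp y + exp y) := by
    simp
    ring
  rw [← hasSum_nat_add_iff' 1, funext hshift, hsum]
  exact ((hasSum_mul_pow_div_factorial y).add (hasSum_pow_div_factorial y)).mul_left y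

lemma Real.hasSum_exp_neg_mul_pow_div_factorial_mul_div_sq (y : ℝ) (n : ℕ) :
    HasSum (fun k : ℕ => exp (-y) * y ^ k / k ! * ((k : ℝ) / n) ^ 2) ((y ^ 2 + y) / n ^ 2) := by
  have hterm (k : ℕ) : exp (-y) * y ^ k / k ! * ((k : ℝ) / n) ^ 2 =
      exp (-y) / n ^ 2 * (k ^ 2 * y ^ k / k !) := by
    ring
  have hsum : (y ^ 2 + y) / n ^ 2 = exp (-y) / n ^ 2 * ((y ^ 2 + y) * exp y) := by
    rw [exp_neg]
    field_simp
  rw [funext hterm, hsum]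
  exact (hasSum_sq_mul_pow_div_factorial y).mul_left _

lemma szasz_eq_tsum_exp_neg {a : ℝ} (ha : 0 < a) (n : ℕ) (f : ℝ → ℝ) (x : ℝ) :
    szasz a n f x = ∑' k : ℕ, exp (-(x * log a / (a ^ ((1:ℝ)/n) - 1))) *
      (x * log a / (a ^ ((1:ℝ)/n) - 1)) ^ k / k ! * f (k / n) := by
  unfold szasz
  congr! 3 with k
  rw [rpow_def_of_pos ha, show log a * (-x / _) = -(x * log a / (a ^ ((1:ℝ)/n) - 1)) by ring]
  ring

theorem stmt_3_general (a : ℝ) (ha : 1 < a) (n : ℕ) (x : ℝ) :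
    szasz a n (fun t => t ^ 2) x =
      x * Real.log a * ((a ^ ((1:ℝ)/n) - 1) + x * Real.log a) /
        ((a ^ ((1:ℝ)/n) - 1) ^ 2 * n ^ 2) := by
  rw [szasz_eq_tsum_exp_neg (by linarith) n,
    (hasSum_exp_neg_mul_pow_div_factorial_mul_div_sq _ n).tsum_eq]
  -- `a ^ (1/n) = 1` only for `n = 0`, where both sides are `0` through division by zero.
  rcases eq_or_ne (a ^ ((1:ℝ)/n) - 1) 0 with hc | hc
  · rw [hc]
    simp
  · field_simp
    ring

theorem stmt_3 (a : ℝ) (ha : 1 < a) (n : ℕ) (hn : 1 ≤ n) (x : ℝ) (hx : 0 ≤ x) :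
    szasz a n (fun t => t ^ 2) x =
      x * Real.log a * ((a ^ ((1:ℝ)/n) - 1) + x * Real.log a) /
        ((a ^ ((1:ℝ)/n) - 1) ^ 2 * n ^ 2) :=
  stmt_3_general a ha n x
end

section
/- For the operators S*_{n,a}, one has S*_{n,a}(e_4; x) = x·log(a)·((a^(1/n)−1)³ + 7(a^(1/n)−1)²·x·log a + 6(a^(1/n)−1)(x·log a)² + (x·log a)³) / ((a^(1/n)−1)⁴ · n⁴) for all x ≥ 0, where e_4(t) = t⁴. -/
open Real Filter

/-!
Substituting `y = x log a / (a^(1/n) - 1)` turns `S*_{n,a}(f; x)` into the Poisson expectation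
`e^(-y) ∑ y^k / k! f(k/n)`, so `S*_{n,a}(e_4; x)` is the fourth Poisson moment divided by `n^4`.
Expanding `k^4 = ∑ S(4, j) k(k-1)⋯(k-j+1)` in falling factorials (`S` the Stirling numbers of the
second kind) and using `∑ k(k-1)⋯(k-j+1) y^k / k! = y^j e^y` gives the moment
`(y + 7y² + 6y³ + y⁴) e^y`.
-/

open Finset Nat

theorem Nat.pow_eq_sum_stirlingSecond_mul_descFactorial (m k : ℕ) :
    k ^ m = ∑ j ∈ range (m + 1), stirlingSecond m j * k.descFactorial j := by
  induction m with
  | zero => simp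
  | succ m ih =>
    have hmul (j : ℕ) : k.descFactorial j * k = k.descFactorial (j + 1) + j * k.descFactorial j := by
      rcases le_or_gt j k with hjk | hkj
      · rw [descFactorial_succ, ← add_mul, Nat.sub_add_cancel hjk, mul_comm]
      · simp [descFactorial_eq_zero_iff_lt.mpr hkj]
    have hshift : ∑ j ∈ range (m + 1), (j + 1) * stirlingSecond m (j + 1) * k.descFactorial (j + 1)
        = ∑ j ∈ range (m + 1), j * stirlingSecond m j * k.descFactorial j := by
      have h := sum_range_succ' (fun j => j * stirlingSecond m j * k.descFactorial j) (m + 1)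
      rw [sum_range_succ, stirlingSecond_eq_zero_of_lt (lt_succ_self m)] at h
      simpa using h.symm
    rw [pow_succ, ih, sum_mul, sum_range_succ' _ (m + 1), stirlingSecond_succ_zero, zero_mul,
      add_zero]
    calc ∑ j ∈ range (m + 1), stirlingSecond m j * k.descFactorial j * k
        = ∑ j ∈ range (m + 1), (stirlingSecond m j * k.descFactorial (j + 1)
            + j * stirlingSecond m j * k.descFactorial j) :=
          sum_congr rfl fun j _ => by rw [mul_assoc, hmul]; ring
      _ = ∑ j ∈ range (m + 1), (stirlingSecond m j * k.descFactorial (j + 1)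
            + (j + 1) * stirlingSecond m (j + 1) * k.descFactorial (j + 1)) := by
          rw [sum_add_distrib, sum_add_distrib, hshift]
      _ = ∑ j ∈ range (m + 1), stirlingSecond (m + 1) (j + 1) * k.descFactorial (j + 1) :=
          sum_congr rfl fun j _ => by rw [stirlingSecond_succ_succ]; ring

theorem hasSum_descFactorial_mul_pow_div_factorial (m : ℕ) (y : ℝ) :
    HasSum (fun k : ℕ => (k.descFactorial m : ℝ) * y ^ k / k !) (y ^ m * exp y) := by
  have hshift (k : ℕ) :
      ((k + m).descFactorial m : ℝ) * y ^ (k + m) / (k + m)! = y ^ m * (y ^ k / k !) := by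
    have h : (k ! : ℝ) * (k + m).descFactorial m = (k + m)! := by
      exact_mod_cast Nat.add_sub_cancel k m ▸ factorial_mul_descFactorial (Nat.le_add_left m k)
    rw [← h, pow_add]
    field_simp
  have hzero : ∀ k ∉ Set.range (· + m), (k.descFactorial m : ℝ) * y ^ k / k ! = 0 := by
    intro k hk
    have hkm : k < m := by
      by_contra! hmk
      exact hk ⟨k - m, Nat.sub_add_cancel hmk⟩
    simp [descFactorial_eq_zero_iff_lt.mpr hkm]
  rw [← (add_left_injective m).hasSum_iff hzero, Real.exp_eq_exp_ℝ]
  simpa only [Function.comp_def, hshift] using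
    (NormedSpace.expSeries_div_hasSum_exp y).mul_left (y ^ m)

theorem hasSum_pow_mul_pow_div_factorial (m : ℕ) (y : ℝ) :
    HasSum (fun k : ℕ => (k : ℝ) ^ m * y ^ k / k !)
      ((∑ j ∈ range (m + 1), (stirlingSecond m j : ℝ) * y ^ j) * exp y) := by
  have hpow (k : ℕ) : (k : ℝ) ^ m * y ^ k / k !
      = ∑ j ∈ range (m + 1), stirlingSecond m j * ((k.descFactorial j : ℝ) * y ^ k / k !) := by
    rw [← Nat.cast_pow, pow_eq_sum_stirlingSecond_mul_descFactorial, Nat.cast_sum, sum_mul,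
      sum_div]
    push_cast
    exact sum_congr rfl fun j _ => by ring
  simp only [hpow, sum_mul, mul_assoc]
  exact hasSum_sum fun j _ => (hasSum_descFactorial_mul_pow_div_factorial j y).mul_left _

theorem szasz_eq_exp_neg_mul_tsum {a : ℝ} (ha : 0 < a) (n : ℕ) (f : ℝ → ℝ) (x : ℝ) :
    szasz a n f x = exp (-(x * log a / (a ^ ((1 : ℝ) / n) - 1))) *
      ∑' k : ℕ, (x * log a / (a ^ ((1 : ℝ) / n) - 1)) ^ k / k ! * f (k / n) := by
  rw [szasz, ← tsum_mul_left]
  refine tsum_congr fun k => ?_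
  rw [rpow_def_of_pos ha, div_pow]
  ring_nf

theorem stmt_5_general (a : ℝ) (ha : 1 < a) (n : ℕ) (hn : 1 ≤ n) (x : ℝ) :
    szasz a n (fun t => t ^ 4) x =
      x * Real.log a * ((a ^ ((1:ℝ)/n) - 1) ^ 3
        + 7 * (a ^ ((1:ℝ)/n) - 1) ^ 2 * (x * Real.log a)
        + 6 * (a ^ ((1:ℝ)/n) - 1) * (x * Real.log a) ^ 2
        + (x * Real.log a) ^ 3) /
        ((a ^ ((1:ℝ)/n) - 1) ^ 4 * n ^ 4) := by
  have hb : a ^ ((1 : ℝ) / n) - 1 ≠ 0 :=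
    (sub_pos.2 (one_lt_rpow ha (by positivity))).ne'
  have hn0 : (n : ℝ) ≠ 0 := by positivity
  rw [szasz_eq_exp_neg_mul_tsum (by linarith) n]
  set y := x * log a / (a ^ ((1 : ℝ) / n) - 1) with hy
  have htouchard : ∑ j ∈ range (4 + 1), (stirlingSecond 4 j : ℝ) * y ^ j
      = y + 7 * y ^ 2 + 6 * y ^ 3 + y ^ 4 := by
    simp [sum_range_succ, stirlingSecond]
  have hmoment : ∑' k : ℕ, y ^ k / k ! * ((k : ℝ) / n) ^ 4
      = (y + 7 * y ^ 2 + 6 * y ^ 3 + y ^ 4) * exp y / n ^ 4 := by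
    rw [← htouchard, ← ((hasSum_pow_mul_pow_div_factorial 4 y).div_const _).tsum_eq]
    exact tsum_congr fun k => by ring
  rw [hmoment, exp_neg, hy]
  field_simp

theorem stmt_5 (a : ℝ) (ha : 1 < a) (n : ℕ) (hn : 1 ≤ n) (x : ℝ) (hx : 0 ≤ x) :
    szasz a n (fun t => t ^ 4) x =
      x * Real.log a * ((a ^ ((1:ℝ)/n) - 1) ^ 3
        + 7 * (a ^ ((1:ℝ)/n) - 1) ^ 2 * (x * Real.log a)
        + 6 * (a ^ ((1:ℝ)/n) - 1) * (x * Real.log a) ^ 2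
        + (x * Real.log a) ^ 3) /
        ((a ^ ((1:ℝ)/n) - 1) ^ 4 * n ^ 4) :=
  stmt_5_general a ha n hn x
end

section
/- For λ ≥ 0, the operators S*_{n,a} applied to the exponential function t ↦ e^(λt) satisfy S*_{n,a}(e^{λt}; x) = a^((e^{λ/n} − 1)·x / (a^{1/n} − 1)). -/
open Real Filter

/- The weights `a ^ (-x / b) * (x log a / b) ^ k / k!` are Poisson weights with mean
`x log a / b`, so this is their generating function `exp ((c - 1) * x log a / b)`. -/
theorem tsum_rpow_mul_pow_div_mul_pow {a : ℝ} (ha : 0 < a) (b x c : ℝ) :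
    ∑' k : ℕ, a ^ (-x / b) * (x * log a) ^ k / (b ^ k * (k.factorial : ℝ)) * c ^ k =
      a ^ ((c - 1) * x / b) := by
  have hterm : ∀ k : ℕ, a ^ (-x / b) * (x * log a) ^ k / (b ^ k * (k.factorial : ℝ)) * c ^ k =
      a ^ (-x / b) * ((x * log a * c / b) ^ k / k.factorial) := fun k => by
    rw [div_pow, mul_pow]; ring
  have hexp : ∑' k : ℕ, (x * log a * c / b) ^ k / k.factorial = exp (x * log a * c / b) := by
    rw [exp_eq_exp_ℝ, NormedSpace.exp_eq_tsum_div]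
  rw [tsum_congr hterm, tsum_mul_left, hexp, rpow_def_of_pos ha, rpow_def_of_pos ha, ← exp_add]
  ring_nf

theorem stmt_6_general (a : ℝ) (ha : 1 < a) (n : ℕ) (x : ℝ)
    (l : ℝ) :
    szasz a n (fun t => Real.exp (l * t)) x =
      a ^ ((Real.exp (l / n) - 1) * x / (a ^ ((1:ℝ)/n) - 1)) := by
  have hexp : ∀ k : ℕ, exp (l * (k / n)) = exp (l / n) ^ k := fun k => by
    rw [← exp_nat_mul]; ring_nf
  simp only [szasz, hexp]
  exact tsum_rpow_mul_pow_div_mul_pow (by linarith) _ _ _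

theorem stmt_6 (a : ℝ) (ha : 1 < a) (n : ℕ) (hn : 1 ≤ n) (x : ℝ) (hx : 0 ≤ x)
    (l : ℝ) (hl : 0 ≤ l) :
    szasz a n (fun t => Real.exp (l * t)) x =
      a ^ ((Real.exp (l / n) - 1) * x / (a ^ ((1:ℝ)/n) - 1)) :=
  stmt_6_general a ha n x l
end

section
/- For α > 0 and f_α(t) = a^(−αt), one has S*_{n,a}(f_α; x) = a^(x·(a^(−α/n) − 1)/(a^(1/n) − 1)), and consequently S*_{n,a}(f_α) converges to f_α uniformly on [0, ∞) as n → ∞. -/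
/-!
Since `a ^ (-α k / n) = b ^ k` with `b = a ^ (-α / n)`, the operator applied to `f_α` is a multiple
of an exponential series and sums in closed form; its value is `exp (-(s_n x))` with a rate
`s_n = -log a · (b - 1) / (a ^ (1 / n) - 1)`, a quotient of two difference quotients of `h ↦ a ^ h`
at `h = 1 / n`, so `s_n → α log a > 0`. Uniformity on `[0, ∞)` comes from the bound
`|e^{-sx} - e^{-tx}| ≤ |s - t| / c` for `s, t ≥ c > 0`, which rests on `x e^{-cx} ≤ 1 / c`.
-/

open Real Filter

open Topology

theorem hasSum_pow_div_mul_pow (y c b : ℝ) :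
    HasSum (fun k : ℕ => y ^ k / (c ^ k * k.factorial) * b ^ k) (exp (y * b / c)) := by
  rw [exp_eq_exp_ℝ]
  have hterm (k : ℕ) : y ^ k / (c ^ k * k.factorial) * b ^ k = (y * b / c) ^ k / k.factorial := by
    rw [div_pow, mul_pow]
    ring
  simpa only [hterm] using NormedSpace.expSeries_div_hasSum_exp (y * b / c)

/-- No restriction on `n`: for `n = 0` both sides are `1` by the convention `x / 0 = 0`. -/
theorem szasz_rpow_neg_mul {a : ℝ} (ha : 0 < a) (α : ℝ) (n : ℕ) (x : ℝ) :
    szasz a n (fun t => a ^ (-α * t)) x =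
      a ^ (x * (a ^ (-α / n) - 1) / (a ^ ((1:ℝ)/n) - 1)) := by
  rw [szasz]
  set c := a ^ ((1:ℝ)/n) - 1
  set b := a ^ (-α / n)
  have hterm (k : ℕ) : a ^ (-x / c) * (x * log a) ^ k / (c ^ k * k.factorial) * a ^ (-α * (k / n))
      = a ^ (-x / c) * ((x * log a) ^ k / (c ^ k * k.factorial) * b ^ k) := by
    have hpow : a ^ (-α * (k / n)) = b ^ k := by
      rw [← rpow_natCast, ← rpow_mul ha.le]
      ring_nf
    rw [hpow]
    ring
  rw [tsum_congr hterm, ((hasSum_pow_div_mul_pow _ c b).mul_left _).tsum_eq, rpow_def_of_pos ha,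
    rpow_def_of_pos ha, ← exp_add]
  ring_nf

theorem tendsto_rpow_sub_one_div {a : ℝ} (ha : 0 < a) :
    Tendsto (fun h => (a ^ h - 1) / h) (𝓝[≠] 0) (𝓝 (log a)) := by
  simpa [div_eq_inv_mul] using (hasStrictDerivAt_const_rpow ha 0).hasDerivAt.tendsto_slope_zero

theorem tendsto_rpow_mul_sub_one_div_rpow_sub_one {a : ℝ} (ha : 0 < a) (ha1 : a ≠ 1) (β : ℝ) :
    Tendsto (fun h => (a ^ (β * h) - 1) / (a ^ h - 1)) (𝓝[≠] 0) (𝓝 β) := by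
  have hlog : log a ≠ 0 := log_ne_zero_of_pos_of_ne_one ha ha1
  have hlim := (tendsto_rpow_sub_one_div (rpow_pos_of_pos ha β)).div
    (tendsto_rpow_sub_one_div ha) hlog
  rw [log_rpow ha, mul_div_cancel_right₀ _ hlog] at hlim
  refine hlim.congr' (eventually_nhdsWithin_of_forall fun h (hh : h ≠ 0) => ?_)
  simp only [Pi.div_apply, div_div_div_cancel_right₀ hh, rpow_mul ha.le]

theorem tendsto_one_div_natCast_nhdsNE_zero :
    Tendsto (fun n : ℕ => (1:ℝ) / n) atTop (𝓝[≠] 0) := by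
  simpa only [one_div, Function.comp_def] using
    (tendsto_inv_atTop_nhdsGT_zero.comp tendsto_natCast_atTop_atTop).mono_right
      (nhdsGT_le_nhdsNE 0)

theorem mul_exp_neg_mul_le_inv {c : ℝ} (hc : 0 < c) (x : ℝ) : x * exp (-(c * x)) ≤ c⁻¹ :=
  calc x * exp (-(c * x)) = c⁻¹ * (c * x * exp (-(c * x))) := by field_simp
    _ ≤ c⁻¹ * (exp (c * x) * exp (-(c * x))) := by
      gcongr
      linarith [add_one_le_exp (c * x)]
    _ = c⁻¹ := by rw [← exp_add, add_neg_cancel, exp_zero, mul_one]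

theorem exp_neg_mul_sub_exp_neg_mul_le {c s t x : ℝ} (hc : 0 < c) (hcs : c ≤ s) (hst : s ≤ t)
    (hx : 0 ≤ x) : exp (-(s * x)) - exp (-(t * x)) ≤ (t - s) / c :=
  calc exp (-(s * x)) - exp (-(t * x)) = exp (-(s * x)) * (1 - exp (-((t - s) * x))) := by
        rw [mul_sub, ← exp_add]
        ring_nf
    _ ≤ exp (-(c * x)) * ((t - s) * x) := by
      have hdecay : exp (-((t - s) * x)) ≤ 1 := exp_le_one_iff.2 (by nlinarith)
      gcongr
      linarith [add_one_le_exp (-((t - s) * x))]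
    _ = (t - s) * (x * exp (-(c * x))) := by ring
    _ ≤ (t - s) / c := by
      rw [div_eq_mul_inv]
      gcongr
      exact mul_exp_neg_mul_le_inv hc x

theorem abs_exp_neg_mul_sub_exp_neg_mul_le {c s t x : ℝ} (hc : 0 < c) (hs : c ≤ s) (ht : c ≤ t)
    (hx : 0 ≤ x) : |exp (-(s * x)) - exp (-(t * x))| ≤ |s - t| / c := by
  wlog hst : s ≤ t generalizing s t
  · rw [abs_sub_comm, abs_sub_comm s]
    exact this ht hs (le_of_not_ge hst)
  have hle : exp (-(t * x)) ≤ exp (-(s * x)) := exp_le_exp.2 (by nlinarith)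
  rw [abs_of_nonneg (sub_nonneg.2 hle), abs_sub_comm, abs_of_nonneg (sub_nonneg.2 hst)]
  exact exp_neg_mul_sub_exp_neg_mul_le hc hs hst hx

theorem tendstoUniformlyOn_exp_neg_mul_Ici {ι : Type*} {l : Filter ι} {s : ι → ℝ} {γ : ℝ}
    (hγ : 0 < γ) (hs : Tendsto s l (𝓝 γ)) :
    TendstoUniformlyOn (fun i x => exp (-(s i * x))) (fun x => exp (-(γ * x))) l (Set.Ici 0) := by
  rw [Metric.tendstoUniformlyOn_iff]
  intro ε hε
  filter_upwards [Metric.tendsto_nhds.mp hs _ (lt_min (half_pos hγ) (mul_pos hε (half_pos hγ)))]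
    with i hi x (hx : 0 ≤ x)
  rw [dist_eq] at hi ⊢
  have hclose : |s i - γ| < γ / 2 := hi.trans_le (min_le_left _ _)
  have hsmall : |s i - γ| < ε * (γ / 2) := hi.trans_le (min_le_right _ _)
  calc |exp (-(γ * x)) - exp (-(s i * x))| ≤ |γ - s i| / (γ / 2) :=
        abs_exp_neg_mul_sub_exp_neg_mul_le (half_pos hγ) (by linarith)
          (by linarith [(abs_lt.1 hclose).1]) hx
    _ < ε := by rwa [abs_sub_comm, div_lt_iff₀ (half_pos hγ)]

theorem stmt_8 (a : ℝ) (ha : 1 < a) (α : ℝ) (hα : 0 < α) :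
    (∀ n : ℕ, 1 ≤ n → ∀ x : ℝ, 0 ≤ x →
      szasz a n (fun t => a ^ (-α * t)) x =
        a ^ (x * (a ^ (-α / n) - 1) / (a ^ ((1:ℝ)/n) - 1))) ∧
    TendstoUniformlyOn (fun (n : ℕ) (x : ℝ) => szasz a n (fun t => a ^ (-α * t)) x)
      (fun x => a ^ (-α * x)) Filter.atTop (Set.Ici 0) := by
  have ha0 : 0 < a := zero_lt_one.trans ha
  refine ⟨fun n _ x _ => szasz_rpow_neg_mul ha0 α n x, ?_⟩
  have hexponent : Tendsto (fun n : ℕ => (a ^ (-α / n) - 1) / (a ^ ((1:ℝ) / n) - 1)) atTop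
      (𝓝 (-α)) := by
    simpa only [Function.comp_def, mul_one_div] using
      (tendsto_rpow_mul_sub_one_div_rpow_sub_one ha0 ha.ne' (-α)).comp
        tendsto_one_div_natCast_nhdsNE_zero
  have hrate := (tendsto_const_nhds (x := -log a)).mul hexponent
  convert tendstoUniformlyOn_exp_neg_mul_Ici
    (mul_pos_of_neg_of_neg (neg_neg_of_pos (log_pos ha)) (neg_neg_of_pos hα)) hrate using 1
  · ext n x
    rw [szasz_rpow_neg_mul ha0, rpow_def_of_pos ha0]
    ring_nf
  · ext x
    rw [rpow_def_of_pos ha0]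
    ring_nf
end
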